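/- arXiv:1704.03982 — 5 statements merged into one kernel-verified Lean document; each statement's English description precedes it below -/
import Mathlib

section
/- For all n ≥ 1, the polynomial C_{n,121}(q) is identically zero. -/
/-!
Write `a = T₁T₂⁻¹` and `b = T₂T₁⁻¹` in `H₃`. Since `q T₂⁻¹ = T₂ - (q - 1)`, we have
`q a = T₁T₂ - (q - 1) T₁` and `q b = T₂T₁ - (q - 1) T₂`, and the span of `1, q a, q b` over `ℤ[q]`
is stable under multiplication by `q a`. Hence every `qⁿ aⁿ` lies in it, and no element of
this span involves `T₁T₂T₁`.
-/

open Polynomial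

/-- The six coefficient polynomials `(C_{n,0}, C_{n,1}, C_{n,2}, C_{n,12}, C_{n,21}, C_{n,121})`. -/
structure CVec where
  c0 : Polynomial ℤ
  c1 : Polynomial ℤ
  c2 : Polynomial ℤ
  c12 : Polynomial ℤ
  c21 : Polynomial ℤ
  c121 : Polynomial ℤ

/-- One step of the recursion of Theorem 3.3. -/
noncomputable def Cstep (p : CVec) : CVec where
  c0 := X ^ 2 * p.c21 - X * (X - 1) * p.c1
  c1 := -(X - 1) ^ 2 * p.c1 - (X - 1) * p.c0 + X ^ 2 * p.c121
  c2 := X * p.c1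
  c12 := (X - 1) * p.c1 + p.c0
  c21 := -(X - 1) * p.c2 + X * p.c12 - (X - 1) ^ 2 * p.c21 + X * (X - 1) * p.c121
  c121 := p.c2 + (X - 1) * p.c21

/-- `Cw n` is the vector of polynomials `C_{n,*}`; the value at `n = 0` is junk. -/
noncomputable def Cw : ℕ → CVec
  | 0 => ⟨0, 0, 0, 0, 0, 0⟩
  | 1 => ⟨0, -(X - 1), 0, 1, 0, 0⟩
  | (n + 2) => Cstep (Cw (n + 1))

namespace CVec

/-- The coordinates of `c₀ + c₁₂ (T₁T₂ - (q - 1) T₁) + c₂₁ (T₂T₁ - (q - 1) T₂)`. -/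
def InInverseSpan (p : CVec) : Prop :=
  p.c121 = 0 ∧ p.c2 = -(X - 1) * p.c21 ∧ p.c1 = -(X - 1) * p.c12

theorem InInverseSpan.cstep {p : CVec} (hp : p.InInverseSpan) : (Cstep p).InInverseSpan := by
  obtain ⟨h121, h2, h1⟩ := hp
  refine ⟨?_, ?_, ?_⟩ <;> simp only [Cstep, h121, h2, h1] <;> ring

end CVec

theorem Cw_succ_inInverseSpan (n : ℕ) : (Cw (n + 1)).InInverseSpan := by
  induction n with
  | zero => simp [CVec.InInverseSpan, Cw]
  | succ n ih => exact ih.cstep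

theorem C121_eq_zero : ∀ n : ℕ, 1 ≤ n → (Cw n).c121 = 0 := by
  rintro (_ | n) hn
  · omega
  · exact (Cw_succ_inInverseSpan n).1
end

section
/- For all n ≥ 1, deg C_{n,2} ≤ 2n-2, deg C_{n,12} ≤ 2n-2, and deg C_{n,21} ≤ 2n-3 (interpreting the degree of the zero polynomial as -∞ or 0 as appropriate). -/
open Polynomial

/-!
Under the recursion every component of `Cstep p` is a sum of components of `p` multiplied by
factors of degree at most 2, and the profile `(m + 2, m + 2, m + 1, m + 1, m, m)` for the degrees of
`(c0, c1, c2, c12, c21, c121)` is exactly the one that these factors shift to `m + 2`. It holds for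
`Cw 2` with `m = 1`, so by induction for `Cw n` with `m = 2 * n - 3`; the case `n = 1` is read off.
-/

namespace CVec

structure NatDegreeLE (m : ℕ) (p : CVec) : Prop where
  c0 : p.c0.natDegree ≤ m + 2
  c1 : p.c1.natDegree ≤ m + 2
  c2 : p.c2.natDegree ≤ m + 1
  c12 : p.c12.natDegree ≤ m + 1
  c21 : p.c21.natDegree ≤ m
  c121 : p.c121.natDegree ≤ m

theorem NatDegreeLE.cstep {m : ℕ} {p : CVec} (h : p.NatDegreeLE m) :
    (Cstep p).NatDegreeLE (m + 2) := by
  have hX : (X : ℤ[X]).natDegree ≤ 1 := natDegree_X_le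
  have hX1 : ((X : ℤ[X]) - 1).natDegree ≤ 1 := by simpa using natDegree_X_sub_C_le (1 : ℤ)
  have hX2 := natDegree_pow_le_of_le 2 hX
  have hX12 := natDegree_pow_le_of_le 2 hX1
  have hXX1 := natDegree_mul_le_of_le hX hX1
  refine ⟨?_, ?_, ?_, ?_, ?_, ?_⟩ <;> simp only [Cstep, neg_mul]
  · exact (natDegree_sub_le_of_le (natDegree_mul_le_of_le hX2 h.c21)
      (natDegree_mul_le_of_le hXX1 h.c1)).trans (by omega)
  · exact (natDegree_add_le_of_le (natDegree_sub_le_of_le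
      (natDegree_neg_le_of_le (natDegree_mul_le_of_le hX12 h.c1))
      (natDegree_mul_le_of_le hX1 h.c0)) (natDegree_mul_le_of_le hX2 h.c121)).trans (by omega)
  · exact (natDegree_mul_le_of_le hX h.c1).trans (by omega)
  · exact (natDegree_add_le_of_le (natDegree_mul_le_of_le hX1 h.c1) h.c0).trans (by omega)
  · exact (natDegree_add_le_of_le (natDegree_sub_le_of_le (natDegree_add_le_of_le
      (natDegree_neg_le_of_le (natDegree_mul_le_of_le hX1 h.c2))
      (natDegree_mul_le_of_le hX h.c12)) (natDegree_mul_le_of_le hX12 h.c21))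
      (natDegree_mul_le_of_le hXX1 h.c121)).trans (by omega)
  · exact (natDegree_add_le_of_le h.c2 (natDegree_mul_le_of_le hX1 h.c21)).trans (by omega)

end CVec

lemma Cw_natDegreeLE {n : ℕ} (hn : 2 ≤ n) : (Cw n).NatDegreeLE (2 * n - 3) := by
  induction n, hn using Nat.le_induction with
  | base =>
    refine ⟨?_, ?_, ?_, ?_, ?_, ?_⟩ <;> simp only [Cw, Cstep] <;> norm_num <;> compute_degree
  | succ k hk ih =>
    obtain ⟨j, rfl⟩ : ∃ j, k = j + 1 := ⟨k - 1, by omega⟩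
    have hm : 2 * (j + 1 + 1) - 3 = 2 * (j + 1) - 3 + 2 := by omega
    rw [hm]
    exact ih.cstep

theorem C_natDegree_sharp : ∀ n : ℕ, 1 ≤ n →
    (Cw n).c2.natDegree ≤ 2 * n - 2 ∧ (Cw n).c12.natDegree ≤ 2 * n - 2 ∧
    (Cw n).c21.natDegree ≤ 2 * n - 3 := by
  intro n hn
  obtain rfl | hn := hn.eq_or_lt
  · simp [Cw]
  · have h := Cw_natDegreeLE hn
    exact ⟨h.c2.trans (by omega), h.c12.trans (by omega), h.c21⟩
end

section
/- For all n ≥ 2, the coefficient of q^1 in C_{n,0}(q) equals (-1)^{n-2} (equivalently (-1)^n). -/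
open Polynomial

/-! Only constant terms matter: the `q`-coefficient of `C_{n+1,0} = q²C_{n,21} - q(q-1)C_{n,1}`
is `C_{n,1}(0)`, and at `q = 0` the recursion reads `C_{n+1,0}(0) = 0` and
`C_{n+1,1}(0) = C_{n,0}(0) - C_{n,1}(0)`, so `C_{n,1}(0) = (-1)^(n+1)` alternates in sign. -/

theorem Cstep_c0_coeff_zero (p : CVec) : (Cstep p).c0.coeff 0 = 0 := by
  simp [Cstep]

theorem Cstep_c0_coeff_one (p : CVec) : (Cstep p).c0.coeff 1 = p.c1.coeff 0 := by
  simp [Cstep, sq, mul_coeff_one]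

theorem Cstep_c1_coeff_zero (p : CVec) :
    (Cstep p).c1.coeff 0 = p.c0.coeff 0 - p.c1.coeff 0 := by
  simp [Cstep, sq, sub_eq_add_neg, add_comm]

theorem Cw_c0_coeff_zero : ∀ n : ℕ, (Cw n).c0.coeff 0 = 0
  | 0 | 1 => by simp [Cw]
  | _ + 2 => Cstep_c0_coeff_zero _

theorem Cw_succ_c1_coeff_zero : ∀ n : ℕ, (Cw (n + 1)).c1.coeff 0 = (-1) ^ n
  | 0 => by simp [Cw]
  | n + 1 => by
    rw [Cw, Cstep_c1_coeff_zero, Cw_c0_coeff_zero, Cw_succ_c1_coeff_zero n, pow_succ]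
    ring

theorem C0_coeff_one : ∀ n : ℕ, 2 ≤ n → (Cw n).c0.coeff 1 = (-1) ^ (n - 2) := by
  intro n hn
  obtain ⟨m, rfl⟩ := Nat.exists_eq_add_of_le' hn
  rw [Cw, Cstep_c0_coeff_one, Cw_succ_c1_coeff_zero, Nat.add_sub_cancel]
end

section
/- For all n ≥ 1, the coefficient of q^{2n-1} in C_{n,1} plus the coefficient of q^{2n-2} in C_{n,12} equals zero. -/
open Polynomial

/-! The top coefficient of `C_{n,1}` comes only from the term `-(q-1)^2 C_{n-1,1}`, and that of
`C_{n,12}` only from `(q-1) C_{n-1,1}`: the other summands have too small a degree. Both pick up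
the top coefficient of `C_{n-1,1}`, with opposite signs. -/

namespace CVec

structure DegreeBounded (p : CVec) (d : ℕ) : Prop where
  c0 : p.c0.natDegree ≤ d + 1
  c1 : p.c1.natDegree ≤ d + 1
  c2 : p.c2.natDegree ≤ d
  c12 : p.c12.natDegree ≤ d
  c21 : p.c21.natDegree ≤ d + 1
  c121 : p.c121.natDegree ≤ d

theorem DegreeBounded.cstep {p : CVec} {d : ℕ} (hp : p.DegreeBounded d) :
    (Cstep p).DegreeBounded (d + 2) := by
  obtain ⟨h0, h1, h2, h12, h21, h121⟩ := hp
  constructor <;> simp only [Cstep] <;> compute_degree <;> omega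

end CVec

theorem degreeBounded_Cw (n : ℕ) : (Cw (n + 1)).DegreeBounded (2 * n) := by
  induction n with
  | zero => constructor <;> simp only [Cw, mul_zero] <;> compute_degree!
  | succ n ih => exact ih.cstep

theorem coeff_Cstep_c1 {p : CVec} {d : ℕ} (h0 : p.c0.natDegree ≤ d + 1)
    (h1 : p.c1.natDegree ≤ d + 1) (h121 : p.c121.natDegree ≤ d) :
    (Cstep p).c1.coeff (d + 3) = -p.c1.coeff (d + 1) := by
  have expand :
      (Cstep p).c1 = X * (2 * p.c1 - p.c0) + X ^ 2 * (p.c121 - p.c1) + (p.c0 - p.c1) := by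
    simp only [Cstep]; ring
  rw [expand, coeff_add, coeff_add, coeff_X_mul, coeff_X_pow_mul]
  simp (disch := omega) [coeff_eq_zero_of_natDegree_lt]

theorem coeff_Cstep_c12 {p : CVec} {d : ℕ} (h0 : p.c0.natDegree ≤ d + 1)
    (h1 : p.c1.natDegree ≤ d + 1) :
    (Cstep p).c12.coeff (d + 2) = p.c1.coeff (d + 1) := by
  have expand : (Cstep p).c12 = X * p.c1 + (p.c0 - p.c1) := by
    simp only [Cstep]; ring
  rw [expand, coeff_add, coeff_X_mul]
  simp (disch := omega) [coeff_eq_zero_of_natDegree_lt]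

theorem top_coeffs_cancel : ∀ n : ℕ, 1 ≤ n →
    (Cw n).c1.coeff (2 * n - 1) + (Cw n).c12.coeff (2 * n - 2) = 0 := by
  rintro (_ | _ | m) hn
  · omega
  · simp [Cw, coeff_one]
  · have hp := degreeBounded_Cw m
    rw [show 2 * (m + 2) - 1 = 2 * m + 3 by omega, show 2 * (m + 2) - 2 = 2 * m + 2 by omega]
    change (Cstep (Cw (m + 1))).c1.coeff _ + (Cstep (Cw (m + 1))).c12.coeff _ = 0
    rw [coeff_Cstep_c1 hp.c0 hp.c1 hp.c121, coeff_Cstep_c12 hp.c0 hp.c1, neg_add_cancel]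
end

section
/- For all n ≥ 1, the Laurent polynomial V_n(t) (the Jones polynomial of W(3,n)) has all exponents in the range [-n, n]; that is, every monomial t^k appearing with nonzero coefficient satisfies -n ≤ k ≤ n. -/
open Polynomial

open LaurentPolynomial in
/-- The Jones polynomial `V_{W(3,n)}(t)` of the weaving knot `W(3,n)`, as a Laurent
polynomial in `t` (here `T k` denotes `t^k`). -/
noncomputable def V (n : ℕ) : LaurentPolynomial ℤ :=
  T (-(n : ℤ) - 1) *
    ((1 + T 1) ^ 2 * toLaurent (Cw n).c0 +
      (1 + T 1) * T 2 * toLaurent ((Cw n).c1 + (Cw n).c2) +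
      T 4 * toLaurent ((Cw n).c12 + (Cw n).c21))


/-!
Along the recursion the six coefficients collapse to three: `C_{n,121} = 0`,
`C_{n,1} = -(q-1) C_{n,12}` and `C_{n,2} = -(q-1) C_{n,21}`. With these relations the
bracket `(1+t)^2 C_0 + (1+t) t^2 (C_1 + C_2) + t^4 (C_12 + C_21)` simplifies to
`(1+t)^2 C_0 + t^2 (C_12 + C_21)`, because `t^4 - (1+t)(t-1) t^2 = t^2`. A degree count along
the recursion bounds its degree by `2n+1`, and it is divisible by `t` since `t ∣ C_{n,0}`; the
normalising factor `t^{-n-1}` then centres its exponents in `[-n, n]`.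
-/

open Polynomial LaurentPolynomial

lemma LaurentPolynomial.exists_mem_support_of_coeff_T_mul_toLaurent_ne_zero {R : Type*}
    [Semiring R] {p : R[X]} {m k : ℤ} (h : (T m * toLaurent p).coeff k ≠ 0) :
    ∃ i ∈ p.support, k = m + i := by
  have hk : (toLaurent p).coeff (-m + k) ≠ 0 := by
    rwa [T, AddMonoidAlgebra.coeff_single_mul_apply, one_mul] at h
  rw [← Finsupp.mem_support_iff, support_coeff_toLaurent, Finset.mem_map] at hk
  obtain ⟨i, hi, hik⟩ := hk
  exact ⟨i, hi, by rw [Nat.castEmbedding_apply] at hik; omega⟩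

namespace CVec

structure Reduced (p : CVec) : Prop where
  c121_eq : p.c121 = 0
  c1_eq : p.c1 = -(X - 1) * p.c12
  c2_eq : p.c2 = -(X - 1) * p.c21

structure DegreeLE (p : CVec) (n : ℕ) : Prop where
  c0_le : p.c0.natDegree ≤ 2 * n + 1
  c12_le : p.c12.natDegree ≤ 2 * n
  c21_le : p.c21.natDegree ≤ 2 * n

noncomputable def bracket (p : CVec) : ℤ[X] :=
  (1 + X) ^ 2 * p.c0 + (1 + X) * X ^ 2 * (p.c1 + p.c2) + X ^ 4 * (p.c12 + p.c21)

lemma X_dvd_Cstep_c0 (p : CVec) : X ∣ (Cstep p).c0 :=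
  ⟨X * p.c21 - (X - 1) * p.c1, by simp only [Cstep]; ring⟩

variable {p : CVec}

namespace Reduced

lemma Cstep_c0 (h : p.Reduced) : (Cstep p).c0 = X ^ 2 * p.c21 + X * (X - 1) ^ 2 * p.c12 := by
  simp only [Cstep, h.c1_eq]; ring

lemma Cstep_c12 (h : p.Reduced) : (Cstep p).c12 = p.c0 - (X - 1) ^ 2 * p.c12 := by
  simp only [Cstep, h.c1_eq]; ring

lemma Cstep_c21 (h : p.Reduced) : (Cstep p).c21 = X * p.c12 := by
  simp only [Cstep, h.c2_eq, h.c121_eq]; ring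

lemma reduced_Cstep (h : p.Reduced) : (Cstep p).Reduced where
  c121_eq := by simp only [Cstep, h.c2_eq]; ring
  c1_eq := by rw [h.Cstep_c12]; simp only [Cstep, h.c1_eq, h.c121_eq]; ring
  c2_eq := by rw [h.Cstep_c21]; simp only [Cstep, h.c1_eq]; ring

lemma degreeLE_Cstep {n : ℕ} (h : p.Reduced) (hd : p.DegreeLE n) :
    (Cstep p).DegreeLE (n + 1) where
  c0_le := by
    rw [h.Cstep_c0]
    refine (natDegree_add_le _ _).trans (max_le ?_ ?_) <;> refine natDegree_mul_le.trans ?_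
    · have := hd.c21_le; simp only [natDegree_X_pow]; omega
    · have : (X * (X - 1) ^ 2 : ℤ[X]).natDegree ≤ 3 := by compute_degree
      have := hd.c12_le; omega
  c12_le := by
    rw [h.Cstep_c12]
    refine (natDegree_sub_le _ _).trans (max_le (by have := hd.c0_le; omega) ?_)
    refine natDegree_mul_le.trans ?_
    have : ((X - 1) ^ 2 : ℤ[X]).natDegree ≤ 2 := by compute_degree
    have := hd.c12_le; omega
  c21_le := by
    rw [h.Cstep_c21]
    refine natDegree_mul_le.trans ?_
    have := hd.c12_le; simp only [natDegree_X]; omega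

lemma bracket_eq (h : p.Reduced) : p.bracket = (1 + X) ^ 2 * p.c0 + X ^ 2 * (p.c12 + p.c21) := by
  rw [bracket, h.c1_eq, h.c2_eq]; ring

lemma natDegree_bracket_le {n : ℕ} (h : p.Reduced) (hd : p.DegreeLE n) :
    p.bracket.natDegree ≤ 2 * n + 3 := by
  rw [h.bracket_eq]
  refine (natDegree_add_le _ _).trans (max_le ?_ ?_) <;> refine natDegree_mul_le.trans ?_
  · have : ((1 + X) ^ 2 : ℤ[X]).natDegree ≤ 2 := by compute_degree
    have := hd.c0_le; omega
  · have := (natDegree_add_le p.c12 p.c21).trans (max_le hd.c12_le hd.c21_le)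
    simp only [natDegree_X_pow]; omega

lemma X_dvd_bracket (h : p.Reduced) (h0 : X ∣ p.c0) : X ∣ p.bracket := by
  rw [h.bracket_eq]
  exact dvd_add (h0.mul_left _) ((dvd_pow_self X two_ne_zero).mul_right _)

end Reduced

end CVec

open CVec

lemma reduced_Cw (n : ℕ) : (Cw (n + 1)).Reduced := by
  induction n with
  | zero => exact ⟨rfl, by simp [Cw], by simp [Cw]⟩
  | succ n ih => exact ih.reduced_Cstep

lemma degreeLE_Cw (n : ℕ) : (Cw (n + 1)).DegreeLE n := by
  induction n with
  | zero => exact ⟨by simp [Cw], by simp [Cw], by simp [Cw]⟩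
  | succ n ih => exact (reduced_Cw n).degreeLE_Cstep ih

lemma X_dvd_Cw_c0 (n : ℕ) : X ∣ (Cw (n + 1)).c0 := by
  cases n with
  | zero => exact dvd_zero X
  | succ n => exact X_dvd_Cstep_c0 _

lemma V_eq_T_mul_bracket (n : ℕ) : V n = T (-(n : ℤ) - 1) * toLaurent (Cw n).bracket := by
  simp only [V, bracket, map_add, map_mul, map_pow, toLaurent_X, map_one, T_pow, mul_one,
    Nat.cast_ofNat]

theorem V_support : ∀ n : ℕ, 1 ≤ n → ∀ k : ℤ, (V n).coeff k ≠ 0 → -(n : ℤ) ≤ k ∧ k ≤ (n : ℤ) := by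
  intro n hn k hk
  obtain ⟨m, rfl⟩ : ∃ m, n = m + 1 := ⟨n - 1, by omega⟩
  rw [V_eq_T_mul_bracket] at hk
  obtain ⟨i, hi, rfl⟩ := exists_mem_support_of_coeff_T_mul_toLaurent_ne_zero hk
  have hi_pos : i ≠ 0 := by
    rintro rfl
    exact mem_support_iff.mp hi (X_dvd_iff.mp ((reduced_Cw m).X_dvd_bracket (X_dvd_Cw_c0 m)))
  have hi_le := (le_natDegree_of_mem_supp i hi).trans
    ((reduced_Cw m).natDegree_bracket_le (degreeLE_Cw m))
  push_cast
  omega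
end
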